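/- arXiv:1812.02021 — 3 statements merged into one kernel-verified Lean document; each statement's English description precedes it below -/
import Mathlib

section
/- Let λP, λV > 0 with λP ≠ λV, and for each t > 0 let X_t and Y_t be independent Poisson-distributed random variables with means λP·t and λV·t. Then Var[min(X_t, Y_t)] / t converges to min(λP, λV) as t → ∞. -/
/-!
Write `min X Y = X - R` with `R = (X - Y)⁺`. As `0 ≤ R ≤ X` and `Var X = E X = λP t`, the
variance of the minimum differs from `λP t` by at most `2 (E[X R] + E[X] E[R])`. For every
`s ≥ 1` we have `R ≤ X 1{Y < X} ≤ X s^X s^(-Y)`, so by independence these two moments are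
bounded by Poisson moments `E[X^k s^X] E[s^(-Y)]`: a polynomial in `t` times
`exp (λP t (s - 1) + λV t (s⁻¹ - 1))`. When `λP < λV`, the choice `s = √(λV / λP)` turns the
exponent into `-(√λV - √λP)² t`, so the error is `o(t)`.
-/

open MeasureTheory ProbabilityTheory Filter Real
open scoped NNReal Nat Topology

lemma hasSum_descFactorial_mul_pow_div_factorial (k : ℕ) (x : ℝ) :
    HasSum (fun n : ℕ ↦ (n.descFactorial k : ℝ) * x ^ n / n !) (x ^ k * exp x) := by
  refine (hasSum_nat_add_iff' k).1 ?_
  rw [Finset.sum_eq_zero fun i hi ↦ by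
    simp [Nat.descFactorial_eq_zero_iff_lt.2 (Finset.mem_range.1 hi)], sub_zero]
  have hexp : HasSum (fun m : ℕ ↦ x ^ k * (x ^ m / m !)) (x ^ k * exp x) := by
    rw [exp_eq_exp_ℝ]
    exact (NormedSpace.expSeries_div_hasSum_exp x).mul_left _
  refine hexp.congr_fun fun m ↦ ?_
  have h := Nat.factorial_mul_descFactorial (Nat.le_add_left k m)
  rw [Nat.add_sub_cancel] at h
  rw [← h, pow_add]
  push_cast
  field_simp

lemma natCast_sub_min_le_mul_pow_mul_inv_pow {s : ℝ} (hs : 1 ≤ s) (x y : ℕ) :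
    (x : ℝ) - min (x : ℝ) y ≤ x * s ^ x * s⁻¹ ^ y := by
  rcases le_total x y with h | h
  · rw [min_eq_left (by exact_mod_cast h), sub_self]
    positivity
  · have hpow : 1 ≤ s ^ x * s⁻¹ ^ y := by
      rw [← Nat.sub_add_cancel h, pow_add, inv_pow, mul_assoc,
        mul_inv_cancel₀ (by positivity), mul_one]
      exact one_le_pow₀ hs
    calc (x : ℝ) - min (x : ℝ) y ≤ x := sub_le_self _ (by positivity)
      _ ≤ x * (s ^ x * s⁻¹ ^ y) := le_mul_of_one_le_right (by positivity) hpow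
      _ = x * s ^ x * s⁻¹ ^ y := by ring

lemma natCast_sq_mul_pow_eq_descFactorial_add (s : ℝ) :
    (fun n : ℕ ↦ (n : ℝ) ^ 2 * s ^ n) =
      fun n : ℕ ↦ (n.descFactorial 2 : ℝ) * s ^ n + (n : ℝ) * s ^ n := by
  ext n
  rw [Nat.cast_descFactorial_two]
  ring

lemma tendsto_mul_add_mul_exp_neg_mul_atTop_nhds_zero {c : ℝ} (hc : 0 < c) (α β : ℝ) :
    Tendsto (fun t ↦ (α * t + β) * exp (-c * t)) atTop (𝓝 0) := by
  have h1 := (tendsto_rpow_mul_exp_neg_mul_atTop_nhds_zero 1 c hc).const_mul α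
  have h0 := (tendsto_rpow_mul_exp_neg_mul_atTop_nhds_zero 0 c hc).const_mul β
  simpa [add_mul, mul_assoc] using h1.add h0

namespace ProbabilityTheory

lemma hasSum_poissonMeasure_descFactorial_mul_pow (r : ℝ≥0) (s : ℝ) (k : ℕ) :
    HasSum (fun n : ℕ ↦ exp (-r) * r ^ n / n ! * ((n.descFactorial k : ℝ) * s ^ n))
      ((s * r) ^ k * exp (r * (s - 1))) := by
  rw [show (s * r) ^ k * exp (r * (s - 1)) = exp (-r) * ((s * r) ^ k * exp (s * r)) by
    rw [show (r : ℝ) * (s - 1) = -r + s * r by ring, exp_add]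
    ring]
  refine ((hasSum_descFactorial_mul_pow_div_factorial k (s * r)).mul_left _).congr_fun fun n ↦ ?_
  rw [mul_pow]
  ring

lemma integrable_descFactorial_mul_pow_poissonMeasure (r : ℝ≥0) {s : ℝ} (hs : 0 ≤ s) (k : ℕ) :
    Integrable (fun n : ℕ ↦ (n.descFactorial k : ℝ) * s ^ n) Po(r) := by
  refine integrable_poissonMeasure_iff.2 ?_
  refine (hasSum_poissonMeasure_descFactorial_mul_pow r s k).summable.congr fun n ↦ ?_
  rw [Real.norm_of_nonneg (by positivity)]

lemma integral_descFactorial_mul_pow_poissonMeasure (r : ℝ≥0) (s : ℝ) (k : ℕ) :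
    ∫ n, (n.descFactorial k : ℝ) * s ^ n ∂Po(r) = (s * r) ^ k * exp (r * (s - 1)) := by
  rw [integral_poissonMeasure]
  exact (hasSum_poissonMeasure_descFactorial_mul_pow r s k).tsum_eq

lemma integrable_pow_poissonMeasure (r : ℝ≥0) {s : ℝ} (hs : 0 ≤ s) :
    Integrable (fun n : ℕ ↦ s ^ n) Po(r) := by
  simpa using integrable_descFactorial_mul_pow_poissonMeasure r hs 0

lemma integral_pow_poissonMeasure (r : ℝ≥0) (s : ℝ) :
    ∫ n, s ^ n ∂Po(r) = exp (r * (s - 1)) := by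
  simpa using integral_descFactorial_mul_pow_poissonMeasure r s 0

lemma integrable_natCast_mul_pow_poissonMeasure (r : ℝ≥0) {s : ℝ} (hs : 0 ≤ s) :
    Integrable (fun n : ℕ ↦ (n : ℝ) * s ^ n) Po(r) := by
  simpa using integrable_descFactorial_mul_pow_poissonMeasure r hs 1

lemma integral_natCast_mul_pow_poissonMeasure (r : ℝ≥0) (s : ℝ) :
    ∫ n, (n : ℝ) * s ^ n ∂Po(r) = s * r * exp (r * (s - 1)) := by
  simpa using integral_descFactorial_mul_pow_poissonMeasure r s 1

lemma integrable_natCast_sq_mul_pow_poissonMeasure (r : ℝ≥0) {s : ℝ} (hs : 0 ≤ s) :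
    Integrable (fun n : ℕ ↦ (n : ℝ) ^ 2 * s ^ n) Po(r) := by
  rw [natCast_sq_mul_pow_eq_descFactorial_add]
  exact (integrable_descFactorial_mul_pow_poissonMeasure r hs 2).add
    (integrable_natCast_mul_pow_poissonMeasure r hs)

lemma integral_natCast_sq_mul_pow_poissonMeasure (r : ℝ≥0) {s : ℝ} (hs : 0 ≤ s) :
    ∫ n, (n : ℝ) ^ 2 * s ^ n ∂Po(r) = ((s * r) ^ 2 + s * r) * exp (r * (s - 1)) := by
  rw [natCast_sq_mul_pow_eq_descFactorial_add,
    integral_add (integrable_descFactorial_mul_pow_poissonMeasure r hs 2)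
      (integrable_natCast_mul_pow_poissonMeasure r hs),
    integral_descFactorial_mul_pow_poissonMeasure, integral_natCast_mul_pow_poissonMeasure]
  ring

lemma memLp_natCast_poissonMeasure (r : ℝ≥0) : MemLp (fun n : ℕ ↦ (n : ℝ)) 2 Po(r) :=
  (memLp_two_iff_integrable_sq .of_discrete).2 <| by
    simpa using integrable_natCast_sq_mul_pow_poissonMeasure r zero_le_one

lemma integral_natCast_poissonMeasure (r : ℝ≥0) : ∫ n, (n : ℝ) ∂Po(r) = r := by
  simpa using integral_natCast_mul_pow_poissonMeasure r 1

lemma variance_natCast_poissonMeasure (r : ℝ≥0) : Var[fun n : ℕ ↦ (n : ℝ); Po(r)] = r := by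
  rw [variance_eq_sub (memLp_natCast_poissonMeasure r)]
  have h := integral_natCast_sq_mul_pow_poissonMeasure r zero_le_one
  simp only [one_pow, mul_one, one_mul, sub_self, mul_zero, exp_zero] at h
  simp only [Pi.pow_apply, h, integral_natCast_poissonMeasure]
  ring

variable {Ω : Type*} [MeasurableSpace Ω] {μ : Measure Ω}

lemma abs_variance_sub_sub_variance_le [IsProbabilityMeasure μ] {X R : Ω → ℝ} (hX : MemLp X 2 μ)
    (hR : AEStronglyMeasurable R μ) (hR0 : ∀ ω, 0 ≤ R ω) (hRX : ∀ ω, R ω ≤ X ω) :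
    |Var[X - R; μ] - Var[X; μ]| ≤ 2 * (μ[X * R] + μ[X] * μ[R]) := by
  have hRL : MemLp R 2 μ := hX.of_le hR <| ae_of_all _ fun ω ↦ by
    simp only [Real.norm_eq_abs, abs_of_nonneg (hR0 ω), abs_of_nonneg ((hR0 ω).trans (hRX ω)),
      hRX ω]
  have hXR : Integrable (X * R) μ := hX.integrable_mul hRL
  have hvarR : Var[R; μ] ≤ μ[X * R] :=
    (variance_le_expectation_sq hR).trans <| integral_mono hRL.integrable_sq hXR fun ω ↦ by
      simpa [sq] using mul_le_mul_of_nonneg_right (hRX ω) (hR0 ω)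
  have hXR0 : 0 ≤ μ[X * R] :=
    integral_nonneg fun ω ↦ mul_nonneg ((hR0 ω).trans (hRX ω)) (hR0 ω)
  have hmeanProd0 : 0 ≤ μ[X] * μ[R] :=
    mul_nonneg (integral_nonneg fun ω ↦ (hR0 ω).trans (hRX ω)) (integral_nonneg hR0)
  rw [variance_sub hX hRL, covariance_eq_sub hX hRL, abs_le]
  constructor <;> nlinarith [variance_nonneg R μ]

lemma hasLaw_of_map_eq {𝓧 : Type*} [MeasurableSpace 𝓧] {X : Ω → 𝓧} {ν : Measure 𝓧}
    [IsProbabilityMeasure ν] (h : μ.map X = ν) : HasLaw X ν μ :=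
  ⟨.of_map_ne_zero (h ▸ IsProbabilityMeasure.ne_zero ν), h⟩

section Independent

variable {𝓧 𝓨 : Type*} [MeasurableSpace 𝓧] [MeasurableSpace 𝓨] {ν : Measure 𝓧} {ν' : Measure 𝓨}
  {X : Ω → 𝓧} {Y : Ω → 𝓨}

lemma IndepFun.integrable_comp_mul_comp_of_hasLaw (hXY : IndepFun X Y μ) (hX : HasLaw X ν μ)
    (hY : HasLaw Y ν' μ) {f : 𝓧 → ℝ} {g : 𝓨 → ℝ} (hf : Integrable f ν) (hg : Integrable g ν') :
    Integrable (fun ω ↦ f (X ω) * g (Y ω)) μ := by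
  rw [← hX.map_eq] at hf
  rw [← hY.map_eq] at hg
  exact (hXY.comp₀ hX.aemeasurable hY.aemeasurable hf.aemeasurable hg.aemeasurable).integrable_mul
    (hf.comp_aemeasurable hX.aemeasurable) (hg.comp_aemeasurable hY.aemeasurable)

lemma IndepFun.integral_comp_mul_comp_of_hasLaw (hXY : IndepFun X Y μ) (hX : HasLaw X ν μ)
    (hY : HasLaw Y ν' μ) {f : 𝓧 → ℝ} {g : 𝓨 → ℝ} (hf : AEStronglyMeasurable f ν)
    (hg : AEStronglyMeasurable g ν') :
    ∫ ω, f (X ω) * g (Y ω) ∂μ = (∫ x, f x ∂ν) * ∫ y, g y ∂ν' := by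
  rw [hXY.integral_fun_comp_mul_comp hX.aemeasurable hY.aemeasurable (hX.map_eq ▸ hf)
    (hY.map_eq ▸ hg)]
  exact congr_arg₂ _ (hX.integral_comp hf) (hY.integral_comp hg)

end Independent

variable [IsProbabilityMeasure μ]

lemma abs_variance_min_sub_le_of_hasLaw_poissonMeasure {X Y : Ω → ℕ} {a b : ℝ≥0}
    (hXY : IndepFun X Y μ) (hX : HasLaw X Po(a) μ) (hY : HasLaw Y Po(b) μ) {s : ℝ} (hs : 1 ≤ s) :
    |Var[fun ω ↦ (min (X ω) (Y ω) : ℝ); μ] - a|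
      ≤ 2 * ((s * a) ^ 2 + s * a + a * (s * a)) * (exp (a * (s - 1)) * exp (b * (s⁻¹ - 1))) := by
  have hs0 : 0 ≤ s := zero_le_one.trans hs
  set Xr : Ω → ℝ := fun ω ↦ X ω
  set R : Ω → ℝ := fun ω ↦ X ω - min (X ω : ℝ) (Y ω)
  have hR0 : ∀ ω, 0 ≤ R ω := fun ω ↦ sub_nonneg.2 (min_le_left _ _)
  have hRX : ∀ ω, R ω ≤ Xr ω := fun ω ↦ sub_le_self _ (le_min (by positivity) (by positivity))
  have hR_le : ∀ ω, R ω ≤ X ω * s ^ X ω * s⁻¹ ^ Y ω := fun ω ↦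
    natCast_sub_min_le_mul_pow_mul_inv_pow hs (X ω) (Y ω)
  have hXrR_le : ∀ ω, Xr ω * R ω ≤ (X ω : ℝ) ^ 2 * s ^ X ω * s⁻¹ ^ Y ω := fun ω ↦ by
    calc Xr ω * R ω ≤ X ω * (X ω * s ^ X ω * s⁻¹ ^ Y ω) :=
          mul_le_mul_of_nonneg_left (hR_le ω) (Nat.cast_nonneg _)
      _ = (X ω : ℝ) ^ 2 * s ^ X ω * s⁻¹ ^ Y ω := by ring
  have hXr : MemLp Xr 2 μ := (memLp_map_measure_iff .of_discrete hX.aemeasurable).1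
    (hX.map_eq ▸ memLp_natCast_poissonMeasure a)
  have hR : AEStronglyMeasurable R μ := by
    have := hX.aemeasurable
    have := hY.aemeasurable
    fun_prop
  have hvarX : Var[Xr; μ] = a := by
    rw [← variance_natCast_poissonMeasure a, ← hX.map_eq, variance_map .of_discrete hX.aemeasurable]
    rfl
  have hmeanX : μ[Xr] = (a : ℝ) := by
    rw [← integral_natCast_poissonMeasure a, ← hX.integral_comp .of_discrete]
    rfl
  have hmeanR : μ[R] ≤ s * a * (exp (a * (s - 1)) * exp (b * (s⁻¹ - 1))) := by
    refine (integral_mono_of_nonneg (ae_of_all _ hR0) ?_ (ae_of_all _ hR_le)).trans_eq ?_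
    · exact hXY.integrable_comp_mul_comp_of_hasLaw hX hY
        (integrable_natCast_mul_pow_poissonMeasure a hs0)
        (integrable_pow_poissonMeasure b (by positivity))
    · rw [hXY.integral_comp_mul_comp_of_hasLaw hX hY (f := fun n ↦ (n : ℝ) * s ^ n)
        (g := fun n ↦ s⁻¹ ^ n) .of_discrete .of_discrete, integral_natCast_mul_pow_poissonMeasure,
        integral_pow_poissonMeasure]
      ring
  have hmeanXR :
      μ[Xr * R] ≤ ((s * a) ^ 2 + s * a) * (exp (a * (s - 1)) * exp (b * (s⁻¹ - 1))) := by
    refine (integral_mono_of_nonneg (ae_of_all _ fun ω ↦ mul_nonneg (Nat.cast_nonneg _) (hR0 ω))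
      ?_ (ae_of_all _ hXrR_le)).trans_eq ?_
    · exact hXY.integrable_comp_mul_comp_of_hasLaw hX hY
        (integrable_natCast_sq_mul_pow_poissonMeasure a hs0)
        (integrable_pow_poissonMeasure b (by positivity))
    · rw [hXY.integral_comp_mul_comp_of_hasLaw hX hY (f := fun n ↦ (n : ℝ) ^ 2 * s ^ n)
        (g := fun n ↦ s⁻¹ ^ n) .of_discrete .of_discrete,
        integral_natCast_sq_mul_pow_poissonMeasure a hs0, integral_pow_poissonMeasure]
      ring
  have hmin : (fun ω ↦ (min (X ω) (Y ω) : ℝ)) = Xr - R := by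
    ext ω
    simp [Xr, R]
  have hvar := abs_variance_sub_sub_variance_le hXr hR hR0 hRX
  rw [hvarX, hmeanX] at hvar
  rw [hmin]
  nlinarith [mul_le_mul_of_nonneg_left hmeanR a.2]

lemma tendsto_variance_min_div_atTop_of_lt {X Y : ℝ → Ω → ℕ} {lamP lamV : ℝ} (hP : 0 < lamP)
    (hlt : lamP < lamV) (hXY : ∀ t, 0 < t → IndepFun (X t) (Y t) μ)
    (hX : ∀ t, 0 < t → HasLaw (X t) Po((lamP * t).toNNReal) μ)
    (hY : ∀ t, 0 < t → HasLaw (Y t) Po((lamV * t).toNNReal) μ) :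
    Tendsto (fun t ↦ Var[fun ω ↦ (min (X t ω) (Y t ω) : ℝ); μ] / t) atTop (𝓝 lamP) := by
  obtain ⟨p, hp, rfl⟩ : ∃ p, 0 < p ∧ p ^ 2 = lamP := ⟨√lamP, sqrt_pos.2 hP, sq_sqrt hP.le⟩
  obtain ⟨v, hpv, rfl⟩ : ∃ v, p < v ∧ v ^ 2 = lamV :=
    ⟨√lamV, (lt_sqrt hp.le).2 hlt, sq_sqrt (hP.trans hlt).le⟩
  have hv : 0 < v := hp.trans hpv
  have hbound : ∀ t > 0, |Var[fun ω ↦ (min (X t ω) (Y t ω) : ℝ); μ] / t - p ^ 2|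
      ≤ (2 * (p ^ 2 * v ^ 2 + p ^ 3 * v) * t + 2 * p * v) * exp (-(v - p) ^ 2 * t) := by
    intro t ht
    have h := abs_variance_min_sub_le_of_hasLaw_poissonMeasure (hXY t ht) (hX t ht) (hY t ht)
      ((one_le_div hp).2 hpv.le)
    rw [coe_toNNReal _ (by positivity), coe_toNNReal _ (by positivity), ← exp_add,
      show p ^ 2 * t * (v / p - 1) + v ^ 2 * t * ((v / p)⁻¹ - 1) = -(v - p) ^ 2 * t by
        field_simp; ring] at h
    rw [div_sub' ht.ne', mul_comm t, abs_div, abs_of_pos ht, div_le_iff₀ ht]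
    refine h.trans_eq ?_
    field_simp
    ring
  refine tendsto_iff_norm_sub_tendsto_zero.2 <| squeeze_zero' (.of_forall fun _ ↦ norm_nonneg _)
    ((eventually_gt_atTop 0).mono hbound) <|
      tendsto_mul_add_mul_exp_neg_mul_atTop_nhds_zero (pow_pos (sub_pos.2 hpv) 2)
        (2 * (p ^ 2 * v ^ 2 + p ^ 3 * v)) (2 * p * v)

end ProbabilityTheory

theorem synchronized_flow_variance_rate_unequal_general
    {Ω : Type*} [MeasurableSpace Ω] (μ : Measure Ω) [IsProbabilityMeasure μ]
    (lamP lamV : ℝ) (hP : 0 < lamP) (hV : 0 < lamV) (hne : lamP ≠ lamV)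
    (X Y : ℝ → Ω → ℕ)
    (hindep : ∀ t, 0 < t → IndepFun (X t) (Y t) μ)
    (hX : ∀ t, 0 < t → μ.map (X t) = poissonMeasure (lamP * t).toNNReal)
    (hY : ∀ t, 0 < t → μ.map (Y t) = poissonMeasure (lamV * t).toNNReal) :
    Tendsto (fun t => variance (fun ω => (min (X t ω) (Y t ω) : ℝ)) μ / t) atTop
      (nhds (min lamP lamV)) := by
  have hXlaw t ht := hasLaw_of_map_eq (hX t ht)
  have hYlaw t ht := hasLaw_of_map_eq (hY t ht)
  rcases hne.lt_or_gt with h | h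
  · rw [min_eq_left h.le]
    exact tendsto_variance_min_div_atTop_of_lt hP h hindep hXlaw hYlaw
  · rw [min_eq_right h.le]
    simp_rw [min_comm (X _ _ : ℝ)]
    exact tendsto_variance_min_div_atTop_of_lt hV h (fun t ht ↦ (hindep t ht).symm) hYlaw hXlaw

/-- If `λP, λV > 0`, `λP ≠ λV`, and for each `t > 0`, `X t` and `Y t` are
independent Poisson random variables with means `λP·t` and `λV·t`, then
`Var[min(X_t, Y_t)] / t → min(λP, λV)` as `t → ∞`. -/
theorem synchronized_flow_variance_rate_unequal
    {Ω : Type*} [MeasurableSpace Ω] (μ : Measure Ω) [IsProbabilityMeasure μ]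
    (lamP lamV : ℝ) (hP : 0 < lamP) (hV : 0 < lamV) (hne : lamP ≠ lamV)
    (X Y : ℝ → Ω → ℕ)
    (hXm : ∀ t, 0 < t → Measurable (X t)) (hYm : ∀ t, 0 < t → Measurable (Y t))
    (hindep : ∀ t, 0 < t → IndepFun (X t) (Y t) μ)
    (hX : ∀ t, 0 < t → μ.map (X t) = poissonMeasure (lamP * t).toNNReal)
    (hY : ∀ t, 0 < t → μ.map (Y t) = poissonMeasure (lamV * t).toNNReal) :
    Tendsto (fun t => variance (fun ω => (min (X t ω) (Y t ω) : ℝ)) μ / t) atTop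
      (nhds (min lamP lamV)) :=
  synchronized_flow_variance_rate_unequal_general μ lamP lamV hP hV hne X Y hindep hX hY
end

section
/- Let λT, μT, λA, μA, λr, μr > 0 be reals and c ≥ 1 a natural number, where λr = λT + λA (every taxi service completion enters the road queue, and road departures exit the system). Define π : ℕ × ℕ × ℕ → ℝ by π(xT, xA, x) = (λT/μT)^{xT} · (λA/μA)^{xA} · g(x), with g(x) = (λr/μr)^x / x! for x < c and g(x) = (λr/μr)^x / (c^{x−c} c!) for x ≥ c. Then π satisfies the global balance equations of the subnetwork: for all natural numbers xT, xA, x, (λT + λA + [xT > 0]·μT + [xA > 0]·μA + min(x, c)·μr) · π(xT, xA, x) = [xT > 0]·λT·π(xT−1, xA, x) + [xA > 0]·λA·π(xT, xA−1, x) + [x > 0]·μT·π(xT+1, xA, x−1) + [x > 0]·μA·π(xT, xA+1, x−1) + min(x+1, c)·μr·π(xT, xA, x+1), where [P] denotes 1 if P holds and 0 otherwise. -/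
/-- The unnormalized M/M/c stationary occupancy weight:
`g(x) = (λ/μ)^x / x!` for `x < c` and `g(x) = (λ/μ)^x / (c^{x-c} · c!)` for `x ≥ c`. -/
noncomputable def mmcWeight (lam mu : ℝ) (c : ℕ) (x : ℕ) : ℝ :=
  if x < c then (lam / mu) ^ x / (Nat.factorial x : ℝ)
  else (lam / mu) ^ x / ((c : ℝ) ^ (x - c) * (Nat.factorial c : ℝ))

/-- The product-form stationary weight of one spatial unit's subnetwork at state
`(xT, xA, x)`: `(λT/μT)^{xT} · (λA/μA)^{xA} · g(x)` where `g` is the M/M/c weight of the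
road queue with arrival rate `λr` and per-server service rate `μr`. -/
noncomputable def subnetWeight (lamT muT lamA muA lamr mur : ℝ) (c : ℕ)
    (xT xA x : ℕ) : ℝ :=
  (lamT / muT) ^ xT * (lamA / muA) ^ xA * mmcWeight lamr mur c x

lemma mmc_step (lam mu : ℝ) (hmu : 0 < mu) (c : ℕ) (hc : 1 ≤ c) (x : ℕ) :
    (min (x+1) c : ℝ) * mu * mmcWeight lam mu c (x+1) = lam * mmcWeight lam mu c x := by
  have hmu' : (mu : ℝ) ≠ 0 := ne_of_gt hmu
  rcases lt_or_ge (x+1) c with h | h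
  · have hx : x < c := Nat.lt_of_succ_lt h
    have hmin : min ((x:ℝ)+1) (c:ℝ) = (x:ℝ)+1 := min_eq_left (by exact_mod_cast h.le)
    have hfact : (Nat.factorial (x+1) : ℝ) = (x+1) * Nat.factorial x := by
      push_cast [Nat.factorial_succ]; ring
    have hfx : (Nat.factorial x : ℝ) ≠ 0 := by positivity
    have hfx1 : ((x:ℝ)+1) ≠ 0 := by positivity
    rw [hmin]
    simp only [mmcWeight, if_pos hx, if_pos h, hfact, pow_succ]
    field_simp
  · have hmin : min ((x:ℝ)+1) (c:ℝ) = (c:ℝ) := min_eq_right (by exact_mod_cast h)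
    have hc0 : (c:ℝ) ≠ 0 := by positivity
    have hfc : (Nat.factorial c : ℝ) ≠ 0 := by positivity
    rw [hmin]
    rcases lt_or_ge x c with hx | hx
    · have hxc : x + 1 = c := le_antisymm hx h
      subst hxc
      have hfx : (Nat.factorial x : ℝ) ≠ 0 := by positivity
      simp only [mmcWeight, if_neg (lt_irrefl (x+1)), if_pos hx,
        Nat.sub_self, pow_zero, one_mul, Nat.factorial_succ, pow_succ]
      push_cast
      field_simp
    · have hsub : x + 1 - c = (x - c) + 1 := by omega
      have hpc0 : ((c:ℝ) ^ (x - c)) ≠ 0 := by positivity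
      simp only [mmcWeight, if_neg (by omega : ¬ x+1 < c), if_neg (by omega : ¬ x < c),
        hsub, pow_succ]
      field_simp

/-- with `λr = λT + λA`, the product-form weight `π` satisfies the global
balance equations of the subnetwork: for all `xT, xA, x`,
`(λT + λA + [xT>0]·μT + [xA>0]·μA + min(x,c)·μr)·π(xT,xA,x)
  = [xT>0]·λT·π(xT−1,xA,x) + [xA>0]·λA·π(xT,xA−1,x) + [x>0]·μT·π(xT+1,xA,x−1)
    + [x>0]·μA·π(xT,xA+1,x−1) + min(x+1,c)·μr·π(xT,xA,x+1)`. -/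
theorem subnetwork_global_balance
    (lamT muT lamA muA lamr mur : ℝ)
    (hlamT : 0 < lamT) (hmuT : 0 < muT) (hlamA : 0 < lamA) (hmuA : 0 < muA)
    (hmur : 0 < mur) (c : ℕ) (hc : 1 ≤ c)
    (hroad : lamr = lamT + lamA)
    (xT xA x : ℕ) :
    (lamT + lamA + (if 0 < xT then (1:ℝ) else 0) * muT + (if 0 < xA then (1:ℝ) else 0) * muA +
        (min x c : ℝ) * mur) * subnetWeight lamT muT lamA muA lamr mur c xT xA x =
      (if 0 < xT then (1:ℝ) else 0) * lamT *
          subnetWeight lamT muT lamA muA lamr mur c (xT - 1) xA x +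
      (if 0 < xA then (1:ℝ) else 0) * lamA *
          subnetWeight lamT muT lamA muA lamr mur c xT (xA - 1) x +
      (if 0 < x then (1:ℝ) else 0) * muT *
          subnetWeight lamT muT lamA muA lamr mur c (xT + 1) xA (x - 1) +
      (if 0 < x then (1:ℝ) else 0) * muA *
          subnetWeight lamT muT lamA muA lamr mur c xT (xA + 1) (x - 1) +
      (min (x + 1) c : ℝ) * mur * subnetWeight lamT muT lamA muA lamr mur c xT xA (x + 1) := by
  have h1 := mmc_step lamr mur hmur c hc x
  have hX : (min (x:ℝ) (c:ℝ)) * mur * mmcWeight lamr mur c x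
      = (if 0 < x then (1:ℝ) else 0) * lamr * mmcWeight lamr mur c (x-1) := by
    rcases x with _ | y
    · simp [min_eq_left (by positivity : (0:ℝ) ≤ (c:ℝ))]
    · have := mmc_step lamr mur hmur c hc y
      simpa [Nat.cast_succ] using this
  have hT2 : (if 0 < xT then (1:ℝ) else 0) * lamT * (lamT/muT) ^ (xT-1)
      = (if 0 < xT then (1:ℝ) else 0) * muT * (lamT/muT) ^ xT := by
    rcases xT with _ | s
    · simp
    · simp only [Nat.succ_sub_one, if_pos (Nat.succ_pos s), one_mul, pow_succ]
      field_simp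
  have hA2 : (if 0 < xA then (1:ℝ) else 0) * lamA * (lamA/muA) ^ (xA-1)
      = (if 0 < xA then (1:ℝ) else 0) * muA * (lamA/muA) ^ xA := by
    rcases xA with _ | t
    · simp
    · simp only [Nat.succ_sub_one, if_pos (Nat.succ_pos t), one_mul, pow_succ]
      field_simp
  have hT3 : muT * (lamT/muT) = lamT := by field_simp
  have hA3 : muA * (lamA/muA) = lamA := by field_simp
  simp only [subnetWeight]
  set a := lamT/muT
  set b := lamA/muA
  set iX := (if 0 < x then (1:ℝ) else 0)
  set gx := mmcWeight lamr mur c x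
  set gm := mmcWeight lamr mur c (x-1)
  set gp := mmcWeight lamr mur c (x+1)
  linear_combination (-(a^xT*b^xA))*h1 + (a^xT*b^xA)*hX + (-(b^xA*gx))*hT2
    + (-(a^xT*gx))*hA2 + (-(iX*a^xT*b^xA*gm))*hT3 + (-(iX*a^xT*b^xA*gm))*hA3
    + (iX*a^xT*b^xA*gm - a^xT*b^xA*gx)*hroad
end

section
/- Let I be a finite nonempty index set, and for each i ∈ I let λT_i, μT_i, λA_i, μA_i, λr_i, μr_i > 0 be reals and c_i ≥ 1 a natural number with λT_i < μT_i, λA_i < μA_i, and λr_i < c_i·μr_i. Define f_i : ℕ³ → ℝ by f_i(xT, xA, x) = (λT_i/μT_i)^{xT} (λA_i/μA_i)^{xA} g_i(x), with g_i(x) = (λr_i/μr_i)^x/x! for x < c_i and g_i(x) = (λr_i/μr_i)^x/(c_i^{x−c_i} c_i!) for x ≥ c_i. Then the family X ↦ ∏_{i∈I} f_i(X_i), defined on states X : I → ℕ³, is summable, its total sum equals ∏_{i∈I} [ (1 − λT_i/μT_i)^{-1}(1 − λA_i/μA_i)^{-1}( μr_i·(λr_i/μr_i)^{c_i}/((c_i−1)!(c_i·μr_i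 − λr_i)) + Σ_{n=0}^{c_i−1}(λr_i/μr_i)^n/n! ) ], and hence X ↦ π(φ)·∏_{i∈I} f_i(X_i) is a probability distribution on (ℕ³)^I, where π(φ) is the reciprocal of this product. -/
/-- The product-form stationary weight of one spatial unit's subnetwork at state
`(xT, xA, x) : ℕ × ℕ × ℕ`. -/
noncomputable def unitWeight (lamT muT lamA muA lamr mur : ℝ) (c : ℕ)
    (p : ℕ × ℕ × ℕ) : ℝ :=
  (lamT / muT) ^ p.1 * (lamA / muA) ^ p.2.1 * mmcWeight lamr mur c p.2.2

/-!
The stationary weight of the network factorizes over the spatial units and, inside each unit,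
over its three queues, so the total mass is the product of the one-dimensional masses: two
geometric series for the M/M/1 matching queues and, for the M/M/c road queue, a finite head
`∑_{n<c} ρⁿ/n!` plus a geometric tail `ρᶜ/c! · ∑ₙ (ρ/c)ⁿ` with `ρ = λ/μ`. The stability
conditions are exactly the convergence conditions of these geometric series.
-/

open Finset

universe u v

theorem HasSum.mul_of_real {α β : Type*} {f : α → ℝ} {g : β → ℝ} {s t : ℝ}
    (hf : HasSum f s) (hg : HasSum g t) :
    HasSum (fun p : α × β => f p.1 * g p.2) (s * t) :=
  hf.mul hg (summable_mul_of_summable_norm (summable_norm_iff.mpr hf.summable)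
    (summable_norm_iff.mpr hg.summable))

theorem hasSum_pi_prod {ι : Type u} [Fintype ι] {γ : ι → Type v} {f : ∀ i, γ i → ℝ} {S : ι → ℝ}
    (hf : ∀ i, HasSum (f i) (S i)) :
    HasSum (fun X : ∀ i, γ i => ∏ i, f i (X i)) (∏ i, S i) := by
  suffices H : ∀ (κ : Type u) [Fintype κ] (γ : κ → Type v) (f : ∀ i, γ i → ℝ) (S : κ → ℝ),
      (∀ i, HasSum (f i) (S i)) → HasSum (fun X : ∀ i, γ i => ∏ i, f i (X i)) (∏ i, S i) from
    H ι γ f S hf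
  refine Fintype.induction_empty_option ?_ ?_ ?_
  · intro α β _ e ih γ f S hf
    let _ : Fintype α := Fintype.ofEquiv β e.symm
    have h := ih (fun a => γ (e a)) (fun a => f (e a)) (fun a => S (e a)) fun a => hf (e a)
    rw [← (Equiv.piCongrLeft γ e).hasSum_iff, ← e.prod_comp]
    convert h using 2 with X
    simp only [Function.comp_apply, ← e.prod_comp, Equiv.piCongrLeft_apply_apply]
  · intro γ f S _
    simp [hasSum_unique]
  · intro α _ ih γ f S hf
    have h := (hf none).mul_of_real (ih _ (fun a => f (some a)) (fun a => S (some a))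
      fun a => hf (some a))
    rw [Fintype.prod_option, ← Equiv.piOptionEquivProd.symm.hasSum_iff]
    convert h using 1
    funext p
    simp [Equiv.piOptionEquivProd, Fintype.prod_option]

theorem hasSum_geometric_div {lam mu : ℝ} (hlam : 0 ≤ lam) (h : lam < mu) :
    HasSum (fun n : ℕ => (lam / mu) ^ n) (1 - lam / mu)⁻¹ :=
  hasSum_geometric_of_lt_one (div_nonneg hlam (hlam.trans h.le))
    ((div_lt_one (hlam.trans_lt h)).mpr h)

theorem mmcWeight_of_lt {lam mu : ℝ} {c x : ℕ} (h : x < c) :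
    mmcWeight lam mu c x = (lam / mu) ^ x / x.factorial := if_pos h

theorem mmcWeight_add_self (lam mu : ℝ) (c n : ℕ) :
    mmcWeight lam mu c (n + c) = (lam / mu) ^ c / c.factorial * (lam / mu / c) ^ n := by
  rw [mmcWeight, if_neg (by omega), Nat.add_sub_cancel, pow_add, div_pow]
  ring

theorem mmcWeight_nonneg {lam mu : ℝ} (h : 0 ≤ lam / mu) (c x : ℕ) :
    0 ≤ mmcWeight lam mu c x := by
  unfold mmcWeight; split_ifs <;> positivity

theorem hasSum_mmcWeight {lam mu : ℝ} {c : ℕ} (hlam : 0 ≤ lam) (h : lam < c * mu) :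
    HasSum (mmcWeight lam mu c)
      (mu * (lam / mu) ^ c / ((c - 1).factorial * (c * mu - lam)) +
        ∑ n ∈ range c, (lam / mu) ^ n / n.factorial) := by
  have hc : c ≠ 0 := by rintro rfl; simp at h; linarith
  have hmu : 0 < mu := pos_of_mul_pos_right (hlam.trans_lt h) (Nat.cast_nonneg c)
  have hρ : 0 ≤ lam / mu := div_nonneg hlam hmu.le
  have hρc : lam / mu < c := (div_lt_iff₀ hmu).mpr h
  have htail : HasSum (fun n => mmcWeight lam mu c (n + c))
      ((lam / mu) ^ c / c.factorial * (1 - lam / mu / c)⁻¹) := by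
    simpa only [mmcWeight_add_self] using (hasSum_geometric_div hρ hρc).mul_left _
  rw [hasSum_nat_add_iff, sum_congr rfl fun x hx => mmcWeight_of_lt (mem_range.mp hx)] at htail
  have hclosed : (lam / mu) ^ c / c.factorial * (1 - lam / mu / c)⁻¹ =
      mu * (lam / mu) ^ c / ((c - 1).factorial * (c * mu - lam)) := by
    rw [← Nat.mul_factorial_pred hc, Nat.cast_mul]
    have : (c : ℝ) * mu - lam ≠ 0 := by linarith
    field_simp
  rwa [hclosed] at htail

theorem unitWeight_zero (lamT muT lamA muA lamr mur : ℝ) (c : ℕ) :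
    unitWeight lamT muT lamA muA lamr mur c 0 = 1 := by
  simp only [unitWeight, mmcWeight]
  split_ifs with hc
  · simp
  · simp [Nat.eq_zero_of_not_pos hc]

theorem unitWeight_nonneg {lamT muT lamA muA lamr mur : ℝ} (hT : 0 ≤ lamT / muT)
    (hA : 0 ≤ lamA / muA) (hr : 0 ≤ lamr / mur) (c : ℕ) (p : ℕ × ℕ × ℕ) :
    0 ≤ unitWeight lamT muT lamA muA lamr mur c p := by
  have := mmcWeight_nonneg hr c p.2.2
  unfold unitWeight; positivity

theorem HasSum.pos_of_unitWeight {lamT muT lamA muA lamr mur a : ℝ} {c : ℕ}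
    (h : HasSum (unitWeight lamT muT lamA muA lamr mur c) a) (hT : 0 ≤ lamT / muT)
    (hA : 0 ≤ lamA / muA) (hr : 0 ≤ lamr / mur) : 0 < a :=
  hasSum_lt (f := 0) (i := 0) (unitWeight_nonneg hT hA hr c) (by simp [unitWeight_zero])
    hasSum_zero h

theorem hasSum_unitWeight {lamT muT lamA muA lamr mur : ℝ} {c : ℕ}
    (hlamT : 0 ≤ lamT) (hT : lamT < muT) (hlamA : 0 ≤ lamA) (hA : lamA < muA)
    (hlamr : 0 ≤ lamr) (hr : lamr < c * mur) :
    HasSum (unitWeight lamT muT lamA muA lamr mur c)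
      ((1 - lamT / muT)⁻¹ * (1 - lamA / muA)⁻¹ *
        (mur * (lamr / mur) ^ c / ((c - 1).factorial * (c * mur - lamr)) +
          ∑ n ∈ range c, (lamr / mur) ^ n / n.factorial)) := by
  rw [mul_assoc]
  convert (hasSum_geometric_div hlamT hT).mul_of_real
    ((hasSum_geometric_div hlamA hA).mul_of_real (hasSum_mmcWeight hlamr hr)) using 1
  funext p
  simp only [unitWeight]
  ring

theorem network_product_form_normalization_general
    {I : Type*} [Fintype I]
    (lamT muT lamA muA lamr mur : I → ℝ) (c : I → ℕ)
    (hlamT : ∀ i, 0 < lamT i) (hmuT : ∀ i, 0 < muT i)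
    (hlamA : ∀ i, 0 < lamA i) (hmuA : ∀ i, 0 < muA i)
    (hlamr : ∀ i, 0 < lamr i) (hmur : ∀ i, 0 < mur i)
    (hT : ∀ i, lamT i < muT i) (hA : ∀ i, lamA i < muA i)
    (hr : ∀ i, lamr i < c i * mur i) :
    Summable (fun X : I → ℕ × ℕ × ℕ =>
      ∏ i, unitWeight (lamT i) (muT i) (lamA i) (muA i) (lamr i) (mur i) (c i) (X i)) ∧
    (∑' X : I → ℕ × ℕ × ℕ,
        ∏ i, unitWeight (lamT i) (muT i) (lamA i) (muA i) (lamr i) (mur i) (c i) (X i)) =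
      ∏ i, ((1 - lamT i / muT i)⁻¹ * (1 - lamA i / muA i)⁻¹ *
        (mur i * (lamr i / mur i) ^ c i /
            ((Nat.factorial (c i - 1) : ℝ) * (c i * mur i - lamr i)) +
          ∑ n ∈ Finset.range (c i), (lamr i / mur i) ^ n / (Nat.factorial n : ℝ))) ∧
    ∑' X : I → ℕ × ℕ × ℕ,
        (∏ i, ((1 - lamT i / muT i)⁻¹ * (1 - lamA i / muA i)⁻¹ *
          (mur i * (lamr i / mur i) ^ c i /
              ((Nat.factorial (c i - 1) : ℝ) * (c i * mur i - lamr i)) +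
            ∑ n ∈ Finset.range (c i), (lamr i / mur i) ^ n / (Nat.factorial n : ℝ))))⁻¹ *
        ∏ i, unitWeight (lamT i) (muT i) (lamA i) (muA i) (lamr i) (mur i) (c i) (X i) = 1 := by
  have hunit := fun i => hasSum_unitWeight (hlamT i).le (hT i) (hlamA i).le (hA i)
    (hlamr i).le (hr i)
  have hnet := hasSum_pi_prod hunit
  have hmass_pos := prod_pos fun i (_ : i ∈ univ) => (hunit i).pos_of_unitWeight
    (div_nonneg (hlamT i).le (hmuT i).le) (div_nonneg (hlamA i).le (hmuA i).le)
    (div_nonneg (hlamr i).le (hmur i).le)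
  refine ⟨hnet.summable, hnet.tsum_eq, ?_⟩
  rw [tsum_mul_left, hnet.tsum_eq, inv_mul_cancel₀ hmass_pos.ne']

/-- for a finite nonempty collection of spatial units, each satisfying the
stability conditions, the network product-form family `X ↦ ∏_i f_i(X_i)` is summable over
states `X : I → ℕ³`, its total sum is the product over `i ∈ I` of the per-unit normalizing
constants, and the normalized family is a probability distribution on `(ℕ³)^I`. -/
theorem network_product_form_normalization
    {I : Type*} [Fintype I] [Nonempty I]
    (lamT muT lamA muA lamr mur : I → ℝ) (c : I → ℕ)
    (hlamT : ∀ i, 0 < lamT i) (hmuT : ∀ i, 0 < muT i)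
    (hlamA : ∀ i, 0 < lamA i) (hmuA : ∀ i, 0 < muA i)
    (hlamr : ∀ i, 0 < lamr i) (hmur : ∀ i, 0 < mur i)
    (hc : ∀ i, 1 ≤ c i)
    (hT : ∀ i, lamT i < muT i) (hA : ∀ i, lamA i < muA i)
    (hr : ∀ i, lamr i < c i * mur i) :
    Summable (fun X : I → ℕ × ℕ × ℕ =>
      ∏ i, unitWeight (lamT i) (muT i) (lamA i) (muA i) (lamr i) (mur i) (c i) (X i)) ∧
    (∑' X : I → ℕ × ℕ × ℕ,
        ∏ i, unitWeight (lamT i) (muT i) (lamA i) (muA i) (lamr i) (mur i) (c i) (X i)) =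
      ∏ i, ((1 - lamT i / muT i)⁻¹ * (1 - lamA i / muA i)⁻¹ *
        (mur i * (lamr i / mur i) ^ c i /
            ((Nat.factorial (c i - 1) : ℝ) * (c i * mur i - lamr i)) +
          ∑ n ∈ Finset.range (c i), (lamr i / mur i) ^ n / (Nat.factorial n : ℝ))) ∧
    ∑' X : I → ℕ × ℕ × ℕ,
        (∏ i, ((1 - lamT i / muT i)⁻¹ * (1 - lamA i / muA i)⁻¹ *
          (mur i * (lamr i / mur i) ^ c i /
              ((Nat.factorial (c i - 1) : ℝ) * (c i * mur i - lamr i)) +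
            ∑ n ∈ Finset.range (c i), (lamr i / mur i) ^ n / (Nat.factorial n : ℝ))))⁻¹ *
        ∏ i, unitWeight (lamT i) (muT i) (lamA i) (muA i) (lamr i) (mur i) (c i) (X i) = 1 :=
  network_product_form_normalization_general lamT muT lamA muA lamr mur c hlamT hmuT hlamA hmuA
    hlamr hmur hT hA hr
end
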